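/- arXiv:2605.28269 — 4 statements merged into one kernel-verified Lean document; each statement's English description precedes it below -/
import Mathlib

section
/- For every integer p ≥ 1, every s ∈ ℕ, every q ∈ (0,1)^p, and every λ ∈ ℝ^p with λ_j > 0 for all j and Σ_{j=1}^p λ_j = p, the hypergraph-induced multinomial (H-Multinomial) mass function with parameters (s, q, λ) sums to 1 over all d ∈ ℕ^p; that is, it defines a valid probability distribution on ℕ^p. -/
open scoped BigOperators

/-- Activation pattern: `act d j = 1` if word `j` appears in document `d`, else `0`. -/
def act {p : ℕ} (d : Fin p → ℕ) (j : Fin p) : ℕ := if 0 < d j then 1 else 0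

/-- Repetition vector: occurrences beyond the first appearance. -/
def rep {p : ℕ} (d : Fin p → ℕ) (j : Fin p) : ℕ := d j - act d j

/-- The hypergraph-induced multinomial (H-Multinomial) mass function with
parameters `(s, q, lam)`. -/
noncomputable def hPMF {p : ℕ} (s : ℕ) (q lam : Fin p → ℝ) (d : Fin p → ℕ) : ℝ :=
  if d = 0 then ∏ j, (1 - q j)
  else if (∑ j, rep d j) = s then
    ((s.factorial : ℝ) / ∏ j, ((rep d j).factorial : ℝ)) *
      (∏ j, (q j) ^ act d j * (1 - q j) ^ (1 - act d j)) *
      (∏ j, ((lam j * (act d j : ℝ)) / (∑ u, lam u * (act d u : ℝ))) ^ rep d j)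
  else 0

/-!
Write `d = e + r` with `e = act d ∈ {0,1}^p` and `r = rep d` supported on `e`. For `d ≠ 0` the
mass of `d` is the Bernoulli weight `∏ q_j^{e_j} (1 - q_j)^{1 - e_j}` of `e` times a multinomial
term of `r` with cell probabilities `λ_j e_j / ∑_u λ_u e_u`. For fixed `e ≠ 0` these cell
probabilities sum to `1` (this is where `λ > 0` enters), so by the multinomial theorem the
masses of the fibre of `e` add up to the Bernoulli weight of `e`; the fibre of `e = 0` is `{0}`,
whose mass is that weight as well. The Bernoulli weights sum to `∏_j (q_j + (1 - q_j)) = 1`.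
-/

open Finset
open scoped Nat

section General

variable {ι : Type*} [Fintype ι]

noncomputable def bernoulliMass (q : ι → ℝ) (e : ι → ℕ) : ℝ :=
  ∏ j, q j ^ e j * (1 - q j) ^ (1 - e j)

noncomputable def activeShare (lam : ι → ℝ) (e : ι → ℕ) (j : ι) : ℝ :=
  lam j * e j / ∑ u, lam u * e u

theorem sum_bernoulliMass_eq_one [DecidableEq ι] (q : ι → ℝ) :
    ∑ e ∈ Fintype.piFinset (fun _ : ι => ({0, 1} : Finset ℕ)), bernoulliMass q e = 1 := by
  simp only [bernoulliMass]
  rw [← prod_univ_sum (fun _ => {0, 1}) (fun j x => q j ^ x * (1 - q j) ^ (1 - x))]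
  simp

theorem activeShare_eq_zero {lam : ι → ℝ} {e : ι → ℕ} {j : ι} (hj : e j = 0) :
    activeShare lam e j = 0 := by
  simp [activeShare, hj]

theorem sum_activeShare_eq_one {lam : ι → ℝ} (hlam : ∀ j, 0 < lam j) {e : ι → ℕ} (he : e ≠ 0) :
    ∑ j, activeShare lam e j = 1 := by
  obtain ⟨j, hj⟩ := Function.ne_iff.mp he
  have hpos : 0 < ∑ u, lam u * e u :=
    sum_pos' (fun u _ => mul_nonneg (hlam u).le (Nat.cast_nonneg _))
      ⟨j, mem_univ j, mul_pos (hlam j) (Nat.cast_pos.mpr (Nat.pos_of_ne_zero hj))⟩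
  simp only [activeShare]
  rw [← sum_div, div_self hpos.ne']

theorem sum_piAntidiag_factorial_div_mul_prod_pow [DecidableEq ι] {K : Type*} [Field K]
    [CharZero K] (w : ι → K) (s : ℕ) :
    ∑ r ∈ piAntidiag univ s, ((s ! : K) / ∏ j, ((r j)! : K)) * ∏ j, w j ^ r j
      = (∑ j, w j) ^ s := by
  rw [sum_pow_eq_sum_piAntidiag]
  refine sum_congr rfl fun r hr => ?_
  rw [← (mem_piAntidiag.mp hr).1, Nat.multinomial, Nat.cast_div_charZero
    (Nat.prod_factorial_dvd_factorial_sum _ _), Nat.cast_prod]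

end General

section ActRep

variable {p : ℕ}

theorem act_mem_piFinset (d : Fin p → ℕ) :
    act d ∈ Fintype.piFinset (fun _ : Fin p => ({0, 1} : Finset ℕ)) := by
  simp only [Fintype.mem_piFinset, act]
  intro j; split <;> simp

theorem act_eq_zero_iff {d : Fin p → ℕ} : act d = 0 ↔ d = 0 := by
  simp only [funext_iff, act, Pi.zero_apply]
  refine forall_congr' fun j => ?_
  split <;> omega

theorem act_add_rep (d : Fin p → ℕ) : act d + rep d = d := by
  funext j
  simp only [Pi.add_apply, rep, act]
  split <;> omega

theorem le_rep_add_one (d : Fin p → ℕ) (j : Fin p) : d j ≤ rep d j + 1 := by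
  simp only [rep, act]
  split <;> omega

theorem act_add_of_support_subset {e r : Fin p → ℕ} (he : ∀ j, e j ≤ 1)
    (hsupp : ∀ j, e j = 0 → r j = 0) : act (e + r) = e := by
  funext j
  have := he j; have := hsupp j
  simp only [act, Pi.add_apply]
  split <;> omega

theorem rep_add_of_support_subset {e r : Fin p → ℕ} (he : ∀ j, e j ≤ 1)
    (hsupp : ∀ j, e j = 0 → r j = 0) : rep (e + r) = r := by
  funext j
  simp only [rep, act_add_of_support_subset he hsupp, Pi.add_apply, Nat.add_sub_cancel_left]

end ActRep

section HMultinomial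

variable {p : ℕ} (s : ℕ) (q lam : Fin p → ℝ)

noncomputable def hTerm (e r : Fin p → ℕ) : ℝ :=
  ((s ! : ℝ) / ∏ j, ((r j)! : ℝ)) * bernoulliMass q e * ∏ j, activeShare lam e j ^ r j

variable {s q lam}

theorem hPMF_eq_hTerm {d : Fin p → ℕ} (hd : d ≠ 0) (hs : ∑ j, rep d j = s) :
    hPMF s q lam d = hTerm s q lam (act d) (rep d) := by
  rw [hPMF, if_neg hd, if_pos hs]
  rfl

theorem sum_rep_eq_of_hPMF_ne_zero {d : Fin p → ℕ} (hd : d ≠ 0) (h : hPMF s q lam d ≠ 0) :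
    ∑ j, rep d j = s := by
  by_contra hs
  exact h (by rw [hPMF, if_neg hd, if_neg hs])

theorem hTerm_eq_zero_of_inactive {e r : Fin p → ℕ} {j : Fin p} (hej : e j = 0) (hrj : r j ≠ 0) :
    hTerm s q lam e r = 0 :=
  mul_eq_zero_of_right _ <| prod_eq_zero (mem_univ j) <| by
    rw [activeShare_eq_zero hej, zero_pow hrj]

theorem support_hPMF_subset :
    Function.support (hPMF s q lam) ⊆ ↑(Fintype.piFinset fun _ : Fin p => range (s + 2)) := by
  intro d hd
  rw [mem_coe, Fintype.mem_piFinset]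
  intro j
  rw [mem_range]
  rcases eq_or_ne d 0 with rfl | hd0
  · simp
  · have hrep : rep d j ≤ s := sum_rep_eq_of_hPMF_ne_zero hd0 hd ▸
      single_le_sum (fun _ _ => Nat.zero_le _) (mem_univ j)
    have := le_rep_add_one d j
    omega

theorem sum_hTerm_eq_bernoulliMass (hlam : ∀ j, 0 < lam j) {e : Fin p → ℕ} (he : e ≠ 0) :
    ∑ r ∈ piAntidiag univ s, hTerm s q lam e r = bernoulliMass q e := by
  calc ∑ r ∈ piAntidiag univ s, hTerm s q lam e r
      = bernoulliMass q e * ∑ r ∈ piAntidiag univ s,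
          ((s ! : ℝ) / ∏ j, ((r j)! : ℝ)) * ∏ j, activeShare lam e j ^ r j := by
        rw [mul_sum]
        exact sum_congr rfl fun r _ => by rw [hTerm]; ring
    _ = bernoulliMass q e := by
        rw [sum_piAntidiag_factorial_div_mul_prod_pow, sum_activeShare_eq_one hlam he, one_pow,
          mul_one]

theorem hPMF_add_eq_hTerm {e r : Fin p → ℕ} (he : ∀ j, e j ≤ 1) (hsupp : ∀ j, e j = 0 → r j = 0)
    (he0 : e ≠ 0) (hs : ∑ j, r j = s) : hPMF s q lam (e + r) = hTerm s q lam e r := by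
  have hd : e + r ≠ 0 := by
    rwa [Ne, ← act_eq_zero_iff, act_add_of_support_subset he hsupp]
  rw [hPMF_eq_hTerm hd (by rwa [rep_add_of_support_subset he hsupp]),
    act_add_of_support_subset he hsupp, rep_add_of_support_subset he hsupp]

theorem sum_hPMF_fiber_eq_sum_hTerm {e : Fin p → ℕ}
    (he : e ∈ Fintype.piFinset fun _ : Fin p => ({0, 1} : Finset ℕ)) (he0 : e ≠ 0) :
    ∑ d ∈ Fintype.piFinset (fun _ : Fin p => range (s + 2)) with act d = e, hPMF s q lam d
      = ∑ r ∈ piAntidiag univ s, hTerm s q lam e r := by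
  have he1 : ∀ j, e j ≤ 1 := fun j => by
    have := Fintype.mem_piFinset.mp he j
    simp only [mem_insert, mem_singleton] at this
    omega
  have hsupp : ∀ r, hTerm s q lam e r ≠ 0 → ∀ j, e j = 0 → r j = 0 :=
    fun r hr j hej => by_contra fun hrj => hr (hTerm_eq_zero_of_inactive hej hrj)
  -- `r ↦ e + r` lands in the fibre exactly when `r` is supported on `e`, and otherwise the term
  -- `hTerm s q lam e r` vanishes.
  refine (sum_bij_ne_zero (fun r _ _ => e + r) ?_ ?_ ?_ ?_).symm
  · intro r hr hr0
    refine mem_filter.mpr ⟨Fintype.mem_piFinset.mpr fun j => ?_,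
      act_add_of_support_subset he1 (hsupp r hr0)⟩
    have hrj : r j ≤ s := (mem_piAntidiag.mp hr).1 ▸
      single_le_sum (fun _ _ => Nat.zero_le _) (mem_univ j)
    have := he1 j
    rw [Pi.add_apply, mem_range]
    omega
  · intro r₁ _ _ r₂ _ _ h
    exact add_left_cancel h
  · intro d hd hd0
    have hact := (mem_filter.mp hd).2
    have hne : d ≠ 0 := by rwa [Ne, ← act_eq_zero_iff, hact]
    refine ⟨rep d, mem_piAntidiag.mpr ⟨sum_rep_eq_of_hPMF_ne_zero hne hd0, by simp⟩, ?_, ?_⟩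
    · rwa [← hact, ← hPMF_eq_hTerm hne (sum_rep_eq_of_hPMF_ne_zero hne hd0)]
    · rw [← hact, act_add_rep]
  · intro r hr hr0
    exact (hPMF_add_eq_hTerm he1 (hsupp r hr0) he0 (mem_piAntidiag.mp hr).1).symm

theorem sum_hPMF_fiber_zero :
    ∑ d ∈ Fintype.piFinset (fun _ : Fin p => range (s + 2)) with act d = 0, hPMF s q lam d
      = bernoulliMass q 0 := by
  simp only [act_eq_zero_iff]
  rw [filter_eq', if_pos (by simp), sum_singleton, hPMF, if_pos rfl]
  simp [bernoulliMass]

end HMultinomial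

theorem hPMF_tsum_eq_one_general (p : ℕ) (s : ℕ) (q lam : Fin p → ℝ)
    (hlam : ∀ j, 0 < lam j) :
    ∑' d : Fin p → ℕ, hPMF s q lam d = 1 := by
  rw [tsum_eq_sum' support_hPMF_subset,
    ← sum_fiberwise_of_maps_to fun d _ => act_mem_piFinset d, ← sum_bernoulliMass_eq_one q]
  refine sum_congr rfl fun e he => ?_
  rcases eq_or_ne e 0 with rfl | he0
  · exact sum_hPMF_fiber_zero
  · rw [sum_hPMF_fiber_eq_sum_hTerm he he0, sum_hTerm_eq_bernoulliMass hlam he0]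

/-- the H-Multinomial mass function sums to one over all of `ℕ^p`,
i.e. it is a valid probability distribution. -/
theorem hPMF_tsum_eq_one (p : ℕ) (hp : 1 ≤ p) (s : ℕ) (q lam : Fin p → ℝ)
    (hq : ∀ j, 0 < q j ∧ q j < 1) (hlam : ∀ j, 0 < lam j)
    (hlamsum : ∑ j, lam j = (p : ℝ)) :
    ∑' d : Fin p → ℕ, hPMF s q lam d = 1 :=
  hPMF_tsum_eq_one_general p s q lam hlam
end

section
/- Fix an integer p ≥ 1. Let (s, q, λ) and (s̃, q̃, λ̃) both be admissible H-Multinomial parameter triples (so q, q̃ ∈ (0,1)^p, λ, λ̃ entrywise positive with Σ_j λ_j = Σ_j λ̃_j = p), and suppose s ≥ 1. If the H-Multinomial mass functions with parameters (s, q, λ) and (s̃, q̃, λ̃) agree at every d ∈ ℕ^p, then s = s̃, q = q̃, and λ = λ̃. -/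
open scoped BigOperators

/-!
The parameters are read off the empty document and the documents `activeDoc A j n`, in which
exactly the words of `A` appear and word `j` has `n` repetitions. The single-word document
`activeDoc {j} j s` has positive mass, and it would have none if the size parameter were not `s`.
Its mass `q j * ∏_{u ≠ j} (1 - q u)` together with the mass `∏ u, (1 - q u)` of the empty document
gives `∏_{u ≠ j} (1 - q u)` by addition, hence `q j`. Finally `activeDoc univ j s` has mass
`(∏ u, q u) * (lam j / ∑ u, lam u) ^ s`; as `s ≠ 0` and `∑ u, lam u = p` is fixed, this gives
`lam j`.
-/

namespace HMultinomial

variable {p : ℕ}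

def activeDoc (A : Finset (Fin p)) (j : Fin p) (n : ℕ) : Fin p → ℕ :=
  fun u => (if u ∈ A then 1 else 0) + if u = j then n else 0

variable {A : Finset (Fin p)} {j : Fin p}

lemma act_activeDoc (hj : j ∈ A) (n : ℕ) (u : Fin p) :
    act (activeDoc A j n) u = if u ∈ A then 1 else 0 := by
  by_cases hu : u ∈ A
  · simp [act, activeDoc, hu]
  · have : u ≠ j := fun h => hu (h ▸ hj)
    simp [act, activeDoc, hu, this]

lemma rep_activeDoc (hj : j ∈ A) (n : ℕ) (u : Fin p) :
    rep (activeDoc A j n) u = if u = j then n else 0 := by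
  by_cases hu : u ∈ A
  · simp [rep, act_activeDoc hj, hu, activeDoc]
  · have : u ≠ j := fun h => hu (h ▸ hj)
    simp [rep, act_activeDoc hj, hu, activeDoc, this]

lemma sum_rep_activeDoc (hj : j ∈ A) (n : ℕ) : ∑ u, rep (activeDoc A j n) u = n := by
  simp [rep_activeDoc hj]

lemma activeDoc_ne_zero (hj : j ∈ A) (n : ℕ) : activeDoc A j n ≠ 0 := fun h => by
  simpa [activeDoc, hj] using congrFun h j

lemma hPMF_activeDoc (s : ℕ) (q lam : Fin p → ℝ) (hj : j ∈ A) :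
    hPMF s q lam (activeDoc A j s) =
      (∏ u, if u ∈ A then q u else 1 - q u) * (lam j / ∑ u ∈ A, lam u) ^ s := by
  have hfact : ∏ u, ((rep (activeDoc A j s) u).factorial : ℝ) = s.factorial := by
    simp [rep_activeDoc hj, apply_ite Nat.factorial, apply_ite (Nat.cast : ℕ → ℝ)]
  have hq : ∏ u, q u ^ act (activeDoc A j s) u * (1 - q u) ^ (1 - act (activeDoc A j s) u) =
      ∏ u, if u ∈ A then q u else 1 - q u :=
    Finset.prod_congr rfl fun u _ => by by_cases hu : u ∈ A <;> simp [act_activeDoc hj, hu]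
  have hlam : ∏ u, (lam u * act (activeDoc A j s) u /
        ∑ v, lam v * act (activeDoc A j s) v) ^ rep (activeDoc A j s) u =
      (lam j / ∑ u ∈ A, lam u) ^ s := by
    simp [act_activeDoc hj, rep_activeDoc hj, hj, Finset.sum_ite_mem]
  rw [hPMF, if_neg (activeDoc_ne_zero hj s), if_pos (sum_rep_activeDoc hj s), hfact, hq, hlam,
    div_self (Nat.cast_ne_zero.2 s.factorial_ne_zero), one_mul]

lemma hPMF_activeDoc_of_ne {s n : ℕ} (q lam : Fin p → ℝ) (hj : j ∈ A) (hn : n ≠ s) :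
    hPMF s q lam (activeDoc A j n) = 0 := by
  rw [hPMF, if_neg (activeDoc_ne_zero hj n), if_neg (by rwa [sum_rep_activeDoc hj])]

lemma hPMF_activeDoc_pos (s : ℕ) {q lam : Fin p → ℝ} (hq : ∀ u, 0 < q u ∧ q u < 1)
    (hlam : ∀ u, 0 < lam u) (hj : j ∈ A) : 0 < hPMF s q lam (activeDoc A j s) := by
  rw [hPMF_activeDoc s q lam hj]
  refine mul_pos (Finset.prod_pos fun u _ => ?_) (pow_pos (div_pos (hlam j) ?_) s)
  · split_ifs
    · exact (hq u).1
    · exact sub_pos.2 (hq u).2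
  · exact Finset.sum_pos (fun u _ => hlam u) ⟨j, hj⟩

lemma hPMF_activeDoc_singleton (s : ℕ) (q : Fin p → ℝ) {lam : Fin p → ℝ} (hlam : lam j ≠ 0) :
    hPMF s q lam (activeDoc {j} j s) = q j * ∏ u ∈ Finset.univ.erase j, (1 - q u) := by
  rw [hPMF_activeDoc s q lam (Finset.mem_singleton_self j), ← Finset.mul_prod_erase _ _
    (Finset.mem_univ j)]
  simp +contextual [div_self hlam, Finset.prod_congr rfl]

lemma size_eq_of_hPMF_eq {s s' : ℕ} {q q' lam lam' : Fin p → ℝ} (j : Fin p)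
    (hq : ∀ u, 0 < q u ∧ q u < 1) (hlam : ∀ u, 0 < lam u)
    (h : hPMF s q lam = hPMF s' q' lam') : s = s' := by
  by_contra hne
  have hpos := hPMF_activeDoc_pos s hq hlam (Finset.mem_singleton_self j)
  rw [h, hPMF_activeDoc_of_ne q' lam' (Finset.mem_singleton_self j) hne] at hpos
  exact hpos.false

lemma q_eq_of_hPMF_eq {s : ℕ} {q q' lam lam' : Fin p → ℝ}
    (hq : ∀ u, 0 < q u ∧ q u < 1) (hlam : ∀ u, 0 < lam u) (hlam' : ∀ u, 0 < lam' u)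
    (h : hPMF s q lam = hPMF s q' lam') : q = q' := by
  funext j
  have hzero : (1 - q j) * ∏ u ∈ Finset.univ.erase j, (1 - q u) =
      (1 - q' j) * ∏ u ∈ Finset.univ.erase j, (1 - q' u) := by
    rw [Finset.mul_prod_erase _ (fun u => 1 - q u) (Finset.mem_univ j),
      Finset.mul_prod_erase _ (fun u => 1 - q' u) (Finset.mem_univ j)]
    simpa [hPMF] using congrFun h 0
  have hsingle := congrFun h (activeDoc {j} j s)
  rw [hPMF_activeDoc_singleton s q (hlam j).ne',
    hPMF_activeDoc_singleton s q' (hlam' j).ne'] at hsingle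
  have hB : ∏ u ∈ Finset.univ.erase j, (1 - q u) = ∏ u ∈ Finset.univ.erase j, (1 - q' u) := by
    linarith
  have hBpos : 0 < ∏ u ∈ Finset.univ.erase j, (1 - q u) :=
    Finset.prod_pos fun u _ => sub_pos.2 (hq u).2
  rw [← hB] at hsingle
  exact mul_right_cancel₀ hBpos.ne' hsingle

lemma lam_eq_of_hPMF_eq {s : ℕ} (hs : s ≠ 0) {q lam lam' : Fin p → ℝ}
    (hq : ∀ u, 0 < q u ∧ q u < 1) (hlam : ∀ u, 0 < lam u) (hlam' : ∀ u, 0 ≤ lam' u)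
    (hsum : ∑ u, lam u = ∑ u, lam' u) (h : hPMF s q lam = hPMF s q lam') : lam = lam' := by
  funext j
  have hall := congrFun h (activeDoc Finset.univ j s)
  rw [hPMF_activeDoc s q lam (Finset.mem_univ j), hPMF_activeDoc s q lam' (Finset.mem_univ j),
    ← hsum] at hall
  have hQpos : 0 < ∏ u : Fin p, if u ∈ Finset.univ then q u else 1 - q u := by
    simpa using Finset.prod_pos fun u _ => (hq u).1
  have hSpos : 0 < ∑ u, lam u := Finset.sum_pos (fun u _ => hlam u) ⟨j, Finset.mem_univ j⟩
  have hpow := mul_left_cancel₀ hQpos.ne' hall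
  rwa [pow_left_inj₀ (div_nonneg (hlam j).le hSpos.le) (div_nonneg (hlam' j) hSpos.le) hs,
    div_left_inj' hSpos.ne'] at hpow

end HMultinomial

open HMultinomial in
theorem hPMF_identifiable_general (p : ℕ) (hp : 1 ≤ p)
    (s s' : ℕ) (hs : 1 ≤ s)
    (q q' lam lam' : Fin p → ℝ)
    (hq : ∀ j, 0 < q j ∧ q j < 1)
    (hlam : ∀ j, 0 < lam j) (hlam' : ∀ j, 0 < lam' j)
    (hlamsum : ∑ j, lam j = (p : ℝ)) (hlamsum' : ∑ j, lam' j = (p : ℝ))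
    (heq : ∀ d : Fin p → ℕ, hPMF s q lam d = hPMF s' q' lam' d) :
    s = s' ∧ q = q' ∧ lam = lam' := by
  obtain rfl : s = s' := size_eq_of_hPMF_eq ⟨0, hp⟩ hq hlam (funext heq)
  obtain rfl : q = q' := q_eq_of_hPMF_eq hq hlam hlam' (funext heq)
  exact ⟨rfl, rfl, lam_eq_of_hPMF_eq (Nat.one_le_iff_ne_zero.1 hs) hq hlam (fun j => (hlam' j).le)
    (hlamsum.trans hlamsum'.symm) (funext heq)⟩

/-- identifiability of the H-Multinomial parameters. If `s ≥ 1` and two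
admissible parameter triples induce the same mass function on `ℕ^p`, the triples agree. -/
theorem hPMF_identifiable (p : ℕ) (hp : 1 ≤ p)
    (s s' : ℕ) (hs : 1 ≤ s)
    (q q' lam lam' : Fin p → ℝ)
    (hq : ∀ j, 0 < q j ∧ q j < 1) (hq' : ∀ j, 0 < q' j ∧ q' j < 1)
    (hlam : ∀ j, 0 < lam j) (hlam' : ∀ j, 0 < lam' j)
    (hlamsum : ∑ j, lam j = (p : ℝ)) (hlamsum' : ∑ j, lam' j = (p : ℝ))
    (heq : ∀ d : Fin p → ℕ, hPMF s q lam d = hPMF s' q' lam' d) :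
    s = s' ∧ q = q' ∧ lam = lam' :=
  hPMF_identifiable_general p hp s s' hs q q' lam lam' hq hlam hlam' hlamsum hlamsum' heq
end

section
/- Let D be distributed according to the H-Multinomial distribution with parameters (s, q, λ). Then for each coordinate j ∈ {1,…,p}, the probability that D_j > 0 equals q_j. -/
open scoped BigOperators

/-!
A nonzero document `d` is the same as its activation set `E = {u | 0 < d u}` together with its
repetition vector `r`, a composition of `s` supported on `E`. On the documents with activation
set `E` the H-Multinomial mass factors as the probability that independent `Bernoulli (q u)`
coins come up exactly on `E`, times the multinomial law of `r` with cell probabilities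
`lam u / ∑ v ∈ E, lam v`; the latter sums to one by the multinomial theorem. Hence
`P(D_j > 0)` is the probability that coin `j` comes up, namely `q j`.
-/

open Finset

section Bernoulli

variable {ι : Type*} [Fintype ι] [DecidableEq ι]

/-- Probability that independent `Bernoulli (q u)` coins come up exactly on `E`. -/
def activationProb {R : Type*} [CommRing R] (q : ι → R) (E : Finset ι) : R :=
  (∏ u ∈ E, q u) * ∏ u ∈ Eᶜ, (1 - q u)

theorem sum_activationProb_filter_mem {R : Type*} [CommRing R] (q : ι → R) (j : ι) :
    ∑ E with j ∈ E, activationProb q E = q j := by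
  -- Expand `∏ u, (q u + g u)` where `g = 1 - q` except `g j = 0`, which kills every `E ∌ j`.
  set g : ι → R := Function.update (fun u => 1 - q u) j 0
  have hexpand := Fintype.prod_add q g
  have hsum : ∀ u, q u + g u = (Pi.mulSingle j (q j) : ι → R) u := by
    intro u
    by_cases h : u = j
    · subst h; simp [g]
    · simp [g, h]
  simp only [hsum, Fintype.prod_pi_mulSingle'] at hexpand
  rw [hexpand, sum_filter]
  refine sum_congr rfl fun E _ => ?_
  by_cases hj : j ∈ E
  · rw [if_pos hj, activationProb]
    congr 1
    refine prod_congr rfl fun u hu => ?_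
    have : u ≠ j := fun h => mem_compl.mp hu (h ▸ hj)
    simp [g, this]
  · rw [if_neg hj, prod_eq_zero (mem_compl.mpr hj) (by simp [g]), mul_zero]

end Bernoulli

theorem sum_piAntidiag_multinomial_mul_prod_div_sum_pow {ι K : Type*} [DecidableEq ι] [Field K]
    (E : Finset ι) (lam : ι → K) (hlam : ∑ v ∈ E, lam v ≠ 0) (s : ℕ) :
    ∑ r ∈ E.piAntidiag s,
      (Nat.multinomial E r : K) * ∏ u ∈ E, (lam u / ∑ v ∈ E, lam v) ^ r u = 1 := by
  rw [← sum_pow_eq_sum_piAntidiag, ← sum_div, div_self hlam, one_pow]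

section Documents

variable {p : ℕ}

def actSet (d : Fin p → ℕ) : Finset (Fin p) := univ.filter fun u => 0 < d u

def ofActRep (E : Finset (Fin p)) (r : Fin p → ℕ) : Fin p → ℕ :=
  fun u => (if u ∈ E then 1 else 0) + r u

theorem mem_actSet {d : Fin p → ℕ} {u : Fin p} : u ∈ actSet d ↔ 0 < d u := by
  simp [actSet]

theorem rep_eq_zero_of_notMem_actSet {d : Fin p → ℕ} {u : Fin p} (hu : u ∉ actSet d) :
    rep d u = 0 := by
  have hd : d u = 0 := by simpa [mem_actSet] using hu
  simp [rep, hd]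

theorem rep_mem_piAntidiag_actSet {d : Fin p → ℕ} {s : ℕ} (hs : ∑ u, rep d u = s) :
    rep d ∈ (actSet d).piAntidiag s := by
  refine mem_piAntidiag.mpr ⟨?_, fun u hu => by_contra fun h => hu (rep_eq_zero_of_notMem_actSet h)⟩
  rw [← hs]
  exact sum_subset (subset_univ _) fun u _ hu => rep_eq_zero_of_notMem_actSet hu

theorem ofActRep_actSet_rep (d : Fin p → ℕ) : ofActRep (actSet d) (rep d) = d := by
  funext u
  by_cases h : 0 < d u <;> simp only [ofActRep, rep, act, mem_actSet, h, if_true, if_false] <;> omega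

section Support

variable {E : Finset (Fin p)} {r : Fin p → ℕ} (hr : ∀ u, r u ≠ 0 → u ∈ E)
include hr

theorem actSet_ofActRep : actSet (ofActRep E r) = E := by
  ext u
  by_cases hu : u ∈ E
  · simp [mem_actSet, ofActRep, hu]
  · have : r u = 0 := by_contra fun h => hu (hr u h)
    simp [mem_actSet, ofActRep, hu, this]

theorem rep_ofActRep : rep (ofActRep E r) = r := by
  funext u
  have hact : act (ofActRep E r) u = if u ∈ E then 1 else 0 := by
    have hiff : 0 < ofActRep E r u ↔ u ∈ E := by rw [← mem_actSet, actSet_ofActRep hr]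
    simp only [act, hiff]
  rw [rep, hact, ofActRep]
  omega

end Support

theorem injOn_ofActRep :
    Set.InjOn (fun x : (_ : Finset (Fin p)) × (Fin p → ℕ) => ofActRep x.1 x.2)
      {x | ∀ u, x.2 u ≠ 0 → u ∈ x.1} := by
  rintro ⟨E, r⟩ (hr : ∀ u, r u ≠ 0 → u ∈ E) ⟨E', r'⟩ (hr' : ∀ u, r' u ≠ 0 → u ∈ E') h
  simp only at h
  have hE : E = E' := by rw [← actSet_ofActRep hr, h, actSet_ofActRep hr']
  have hrr : r = r' := by rw [← rep_ofActRep hr, h, rep_ofActRep hr']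
  subst hE hrr
  rfl

theorem prod_bernoulli_act (q : Fin p → ℝ) (d : Fin p → ℕ) :
    ∏ u, q u ^ act d u * (1 - q u) ^ (1 - act d u) = activationProb q (actSet d) := by
  have hterm : ∀ u, q u ^ act d u * (1 - q u) ^ (1 - act d u) =
      if 0 < d u then q u else 1 - q u := by
    intro u
    by_cases h : 0 < d u <;> simp [act, h]
  rw [prod_congr rfl fun u _ => hterm u, prod_ite, activationProb, actSet, compl_filter]

theorem sum_mul_act (lam : Fin p → ℝ) (d : Fin p → ℕ) :
    ∑ u, lam u * (act d u : ℝ) = ∑ u ∈ actSet d, lam u := by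
  rw [actSet, sum_filter]
  exact sum_congr rfl fun u _ => by by_cases h : 0 < d u <;> simp [act, h]

theorem prod_rep_factorial (d : Fin p → ℕ) :
    ∏ u, ((rep d u).factorial : ℝ) = ∏ u ∈ actSet d, ((rep d u).factorial : ℝ) := by
  refine (prod_subset (subset_univ _) fun u _ hu => ?_).symm
  simp [rep_eq_zero_of_notMem_actSet hu]

theorem prod_mul_act_div_pow_rep (lam : Fin p → ℝ) (L : ℝ) (d : Fin p → ℕ) :
    ∏ u, (lam u * (act d u : ℝ) / L) ^ rep d u = ∏ u ∈ actSet d, (lam u / L) ^ rep d u := by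
  rw [← prod_subset (subset_univ (actSet d))]
  · exact prod_congr rfl fun u hu => by simp [act, mem_actSet.mp hu]
  · intro u _ hu
    simp [rep_eq_zero_of_notMem_actSet hu]

theorem hPMF_of_sum_rep_eq {s : ℕ} (q lam : Fin p → ℝ) {d : Fin p → ℕ} (hd : d ≠ 0)
    (hs : ∑ u, rep d u = s) :
    hPMF s q lam d = activationProb q (actSet d) *
      ((Nat.multinomial (actSet d) (rep d) : ℝ) *
        ∏ u ∈ actSet d, (lam u / ∑ v ∈ actSet d, lam v) ^ rep d u) := by
  have hmultinomial : (s.factorial : ℝ) / ∏ u ∈ actSet d, ((rep d u).factorial : ℝ) =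
      Nat.multinomial (actSet d) (rep d) := by
    rw [div_eq_iff (by positivity), ← Nat.cast_prod, ← Nat.cast_mul, mul_comm,
      Nat.multinomial_spec, (mem_piAntidiag.mp (rep_mem_piAntidiag_actSet hs)).1]
  rw [hPMF, if_neg hd, if_pos hs, prod_rep_factorial, hmultinomial, prod_bernoulli_act,
    sum_mul_act, prod_mul_act_div_pow_rep]
  ring

theorem hPMF_eq_zero_of_sum_rep_ne {s : ℕ} (q lam : Fin p → ℝ) {d : Fin p → ℕ} (hd : d ≠ 0)
    (hs : ∑ u, rep d u ≠ s) : hPMF s q lam d = 0 := by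
  simp [hPMF, hd, hs]

theorem hPMF_ofActRep {s : ℕ} (q lam : Fin p → ℝ) {E : Finset (Fin p)} (hE : E.Nonempty)
    {r : Fin p → ℕ} (hr : r ∈ E.piAntidiag s) :
    hPMF s q lam (ofActRep E r) = activationProb q E *
      ((Nat.multinomial E r : ℝ) * ∏ u ∈ E, (lam u / ∑ v ∈ E, lam v) ^ r u) := by
  obtain ⟨hsum, hsupp⟩ := mem_piAntidiag.mp hr
  have hne : ofActRep E r ≠ 0 := by
    obtain ⟨u, hu⟩ := hE
    exact fun h => by simpa [ofActRep, hu] using congrFun h u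
  have hs : ∑ u, rep (ofActRep E r) u = s := by
    rw [rep_ofActRep hsupp, ← hsum]
    exact (sum_subset (subset_univ E) fun u _ hu => by_contra fun h => hu (hsupp u h)).symm
  rw [hPMF_of_sum_rep_eq q lam hne hs, actSet_ofActRep hsupp, rep_ofActRep hsupp]

theorem sum_hPMF_ofActRep {s : ℕ} (q lam : Fin p → ℝ) {E : Finset (Fin p)} (hE : E.Nonempty)
    (hlam : ∑ v ∈ E, lam v ≠ 0) :
    ∑ r ∈ E.piAntidiag s, hPMF s q lam (ofActRep E r) = activationProb q E := by
  rw [sum_congr rfl fun r hr => hPMF_ofActRep q lam hE hr, ← mul_sum,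
    sum_piAntidiag_multinomial_mul_prod_div_sum_pow E lam hlam, mul_one]

/-- The pairs `(E, r)` describing the documents `d` with `0 < d j` and `∑ u, rep d u = s`. -/
def actRepPairs (s : ℕ) (j : Fin p) : Finset ((_ : Finset (Fin p)) × (Fin p → ℕ)) :=
  (univ.filter fun E => j ∈ E).sigma fun E => E.piAntidiag s

theorem mem_image_actRepPairs_of_hPMF_ne_zero {s : ℕ} {q lam : Fin p → ℝ} {d : Fin p → ℕ}
    {j : Fin p} (hdj : 0 < d j) (hd : hPMF s q lam d ≠ 0) :
    d ∈ (actRepPairs s j).image fun x => ofActRep x.1 x.2 := by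
  have hd0 : d ≠ 0 := fun h => by simp [h] at hdj
  have hs : ∑ u, rep d u = s := by_contra fun h => hd (hPMF_eq_zero_of_sum_rep_ne q lam hd0 h)
  refine mem_image.mpr ⟨⟨actSet d, rep d⟩, ?_, ofActRep_actSet_rep d⟩
  simpa [actRepPairs, mem_actSet, hdj] using rep_mem_piAntidiag_actSet hs

end Documents

theorem hPMF_marginal_activation_general (p : ℕ) (s : ℕ) (q lam : Fin p → ℝ)
    (hlam : ∀ j, 0 < lam j)
    (j : Fin p) :
    ∑' d : Fin p → ℕ, (if 0 < d j then hPMF s q lam d else 0) = q j := by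
  classical
  have hsupport : ∀ d ∉ (actRepPairs s j).image fun x => ofActRep x.1 x.2,
      (if 0 < d j then hPMF s q lam d else 0) = 0 := by
    intro d hd
    split_ifs with hdj
    · exact by_contra fun hne => hd (mem_image_actRepPairs_of_hPMF_ne_zero hdj hne)
    · rfl
  have hinj : Set.InjOn (fun x : (_ : Finset (Fin p)) × (Fin p → ℕ) => ofActRep x.1 x.2)
      (actRepPairs s j) :=
    injOn_ofActRep.mono fun x hx => (mem_piAntidiag.mp (mem_sigma.mp hx).2).2
  rw [tsum_eq_sum hsupport, sum_image hinj, actRepPairs, sum_sigma,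
    ← sum_activationProb_filter_mem q j]
  refine sum_congr rfl fun E hE => ?_
  have hjE : j ∈ E := (mem_filter.mp hE).2
  rw [← sum_hPMF_ofActRep q lam ⟨j, hjE⟩ (sum_pos (fun v _ => hlam v) ⟨j, hjE⟩).ne']
  exact sum_congr rfl fun r _ => if_pos (by simp [ofActRep, hjE])

/-- under the H-Multinomial law, each word `j` appears (`D_j > 0`)
with probability `q_j`. -/
theorem hPMF_marginal_activation (p : ℕ) (hp : 1 ≤ p) (s : ℕ) (q lam : Fin p → ℝ)
    (hq : ∀ j, 0 < q j ∧ q j < 1) (hlam : ∀ j, 0 < lam j)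
    (hlamsum : ∑ j, lam j = (p : ℝ)) (j : Fin p) :
    ∑' d : Fin p → ℕ, (if 0 < d j then hPMF s q lam d else 0) = q j :=
  hPMF_marginal_activation_general p s q lam hlam j
end

section
/- Let W, W̃ ∈ ℝ^{n×K} be entrywise nonnegative matrices whose rows each sum to 1, and suppose each of W and W̃ possesses, for every k ∈ {1,…,K}, an anchor row equal to the k-th standard basis vector of ℝ^K. Let Z, Z̃ ∈ ℝ^{m×K} each have linearly independent columns. If W Zᵀ = W̃ Z̃ᵀ, then there exists a K×K permutation matrix R such that Z̃ = Z R and W̃ = W R; that is, the factorization is unique up to a common permutation of the K columns. -/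
/-!
Reading `W Zᵀ = W̃ Z̃ᵀ` at the anchor rows of `W` and of `W̃` gives `Zᵀ = A Z̃ᵀ` and `Z̃ᵀ = C Zᵀ`,
where `A` and `C` collect the rows of `W̃` and `W` at those anchors. Since the columns of `Z` are
independent, `A C = 1`. Both factors are nonnegative, so a positive entry `A k l` forces every entry
of row `l` of `C` off column `k` to vanish; as the rows of `C` are probability vectors, `C` is a
permutation matrix. Then `Z̃ = Z Cᵀ`, and cancelling `Zᵀ` once more gives `W = W̃ C`.
-/

open scoped BigOperators
open Matrix

/-- The `K × K` permutation matrix associated with a permutation `σ`. -/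
def permMatrix {K : ℕ} (σ : Equiv.Perm (Fin K)) : Matrix (Fin K) (Fin K) ℝ :=
  fun i j => if σ i = j then 1 else 0

namespace Matrix

variable {l m n ι R : Type*}

theorem mul_left_injective_of_linearIndependent_row [Fintype m] [CommSemiring R]
    {M : Matrix m n R} (hM : LinearIndependent R M.row) :
    Function.Injective fun X : Matrix l m R => X * M :=
  fun _ _ h => funext fun i => vecMul_injective_iff.mpr hM (congrFun h i)

theorem eq_submatrix_mul_of_mul_eq [Fintype ι] [DecidableEq ι] [Semiring R]
    {W V : Matrix n ι R} {X Y : Matrix ι m R} {e : ι → n} (hW : W.submatrix e id = 1)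
    (h : W * X = V * Y) : X = V.submatrix e id * Y := by
  have hrows (M : Matrix n ι R) (N : Matrix ι m R) :
      (M * N).submatrix e id = M.submatrix e id * N := by
    rw [submatrix_mul _ _ _ _ _ Function.bijective_id, submatrix_id_id]
  rw [← hrows, ← h, hrows, hW, Matrix.one_mul]

theorem submatrix_eq_one_of_forall_row_eq [DecidableEq ι] [Zero R] [One R] {W : Matrix n ι R}
    {e : ι → n} (hW : ∀ k k', W (e k) k' = if k' = k then 1 else 0) :
    W.submatrix e id = 1 := by
  ext k k'
  simp [hW, one_apply, eq_comm]

variable [Fintype ι] [DecidableEq ι] [Ring R] [LinearOrder R] [IsStrictOrderedRing R]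
  {A C : Matrix ι ι R}

theorem row_eq_single_of_mul_eq_one (hA : ∀ i j, 0 ≤ A i j) (hC : ∀ i j, 0 ≤ C i j)
    (hCrow : ∀ i, ∑ j, C i j = 1) (hAC : A * C = 1) {k l : ι} (hkl : A k l ≠ 0) :
    C l = Pi.single k 1 := by
  have hzero : ∀ j ≠ k, C l j = 0 := by
    intro j hj
    have hsum : ∑ p, A k p * C p j = 0 := by rw [← mul_apply, hAC, one_apply_ne hj.symm]
    have := (Finset.sum_eq_zero_iff_of_nonneg fun p _ => mul_nonneg (hA k p) (hC p j)).1
      hsum l (Finset.mem_univ l)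
    exact (mul_eq_zero.1 this).resolve_left hkl
  ext j
  rcases eq_or_ne j k with rfl | hj
  · rw [Pi.single_eq_same, ← hCrow l,
      Finset.sum_eq_single j (fun b _ hb => hzero b hb) (by simp)]
  · rw [Pi.single_eq_of_ne hj, hzero j hj]

theorem exists_eq_permMatrix_of_mul_eq_one (hA : ∀ i j, 0 ≤ A i j) (hC : ∀ i j, 0 ≤ C i j)
    (hCrow : ∀ i, ∑ j, C i j = 1) (hAC : A * C = 1) :
    ∃ σ : Equiv.Perm ι, C = σ.permMatrix R := by
  have hrow : ∀ k, ∃ l, A k l ≠ 0 := fun k => by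
    have hkk : ∑ l, A k l * C l k ≠ 0 := by
      rw [← mul_apply, hAC, one_apply_eq]; exact one_ne_zero
    obtain ⟨l, -, hl⟩ := Finset.exists_ne_zero_of_sum_ne_zero hkk
    exact ⟨l, left_ne_zero_of_mul hl⟩
  choose f hf using hrow
  have hCf k : C (f k) = Pi.single k 1 := row_eq_single_of_mul_eq_one hA hC hCrow hAC (hf k)
  have hf_inj : Function.Injective f := fun k k' h => by
    by_contra hne
    have h1 : C (f k') k = 1 := by rw [← h, hCf, Pi.single_eq_same]
    rw [hCf, Pi.single_eq_of_ne hne] at h1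
    exact zero_ne_one h1
  let σ := Equiv.ofBijective f hf_inj.bijective_of_finite
  refine ⟨σ⁻¹, funext fun l => ?_⟩
  obtain ⟨k, rfl⟩ := hf_inj.bijective_of_finite.surjective l
  rw [hCf, Equiv.Perm.permMatrix, PEquiv.toMatrix_toPEquiv_apply]
  exact congrArg (Pi.single · 1) (σ.symm_apply_apply k).symm

end Matrix

theorem permMatrix_eq_permMatrix {K : ℕ} (σ : Equiv.Perm (Fin K)) :
    permMatrix σ = σ.permMatrix ℝ := by
  ext i j
  simp [permMatrix, PEquiv.toMatrix_apply]

theorem anchored_factorization_unique_general (n m K : ℕ)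
    (W W' : Matrix (Fin n) (Fin K) ℝ) (Z Z' : Matrix (Fin m) (Fin K) ℝ)
    (hWnn : ∀ i k, 0 ≤ W i k) (hWrow : ∀ i, ∑ k, W i k = 1)
    (hW'nn : ∀ i k, 0 ≤ W' i k)
    (hanchor : ∀ k : Fin K, ∃ i : Fin n, ∀ k' : Fin K, W i k' = if k' = k then 1 else 0)
    (hanchor' : ∀ k : Fin K, ∃ i : Fin n, ∀ k' : Fin K, W' i k' = if k' = k then 1 else 0)
    (hZ : LinearIndependent ℝ (fun k : Fin K => fun j : Fin m => Z j k))
    (heq : W * Zᵀ = W' * Z'ᵀ) :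
    ∃ σ : Equiv.Perm (Fin K), Z' = Z * permMatrix σ ∧ W' = W * permMatrix σ := by
  choose i hi using hanchor
  choose i' hi' using hanchor'
  have hcancel {p : Type} := mul_left_injective_of_linearIndependent_row (l := p) (M := Zᵀ) hZ
  have hZ_eq : Zᵀ = W'.submatrix i id * Z'ᵀ :=
    eq_submatrix_mul_of_mul_eq (submatrix_eq_one_of_forall_row_eq hi) heq
  have hZ'_eq : Z'ᵀ = W.submatrix i' id * Zᵀ :=
    eq_submatrix_mul_of_mul_eq (submatrix_eq_one_of_forall_row_eq hi') heq.symm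
  have hAC : W'.submatrix i id * W.submatrix i' id = 1 :=
    hcancel <| show _ * Zᵀ = 1 * Zᵀ by rw [Matrix.mul_assoc, ← hZ'_eq, ← hZ_eq, Matrix.one_mul]
  obtain ⟨σ, hσ⟩ := exists_eq_permMatrix_of_mul_eq_one (C := W.submatrix i' id)
    (fun _ _ => hW'nn _ _) (fun _ _ => hWnn _ _) (fun _ => hWrow _) hAC
  have hZ' : Z'ᵀ = σ.permMatrix ℝ * Zᵀ := by rw [← hσ, ← hZ'_eq]
  have hW : W = W' * σ.permMatrix ℝ := hcancel <|
    show W * Zᵀ = W' * σ.permMatrix ℝ * Zᵀ by rw [heq, hZ', Matrix.mul_assoc]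
  refine ⟨σ⁻¹, ?_, ?_⟩
  · rw [permMatrix_eq_permMatrix, ← transpose_permMatrix, ← transpose_transpose Z', hZ',
      transpose_mul, transpose_transpose]
  · rw [permMatrix_eq_permMatrix, hW, Matrix.mul_assoc, ← permMatrix_mul, inv_mul_cancel,
      permMatrix_one, Matrix.mul_one]

/-- uniqueness of the anchored row-stochastic factorization up to a common
permutation of the `K` columns: if `W, W̃` are row stochastic with anchor rows for all
topics, `Z, Z̃` have linearly independent columns, and `W Zᵀ = W̃ Z̃ᵀ`, then there is a
permutation matrix `R` with `Z̃ = Z R` and `W̃ = W R`. -/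
theorem anchored_factorization_unique (n m K : ℕ)
    (W W' : Matrix (Fin n) (Fin K) ℝ) (Z Z' : Matrix (Fin m) (Fin K) ℝ)
    (hWnn : ∀ i k, 0 ≤ W i k) (hWrow : ∀ i, ∑ k, W i k = 1)
    (hW'nn : ∀ i k, 0 ≤ W' i k) (hW'row : ∀ i, ∑ k, W' i k = 1)
    (hanchor : ∀ k : Fin K, ∃ i : Fin n, ∀ k' : Fin K, W i k' = if k' = k then 1 else 0)
    (hanchor' : ∀ k : Fin K, ∃ i : Fin n, ∀ k' : Fin K, W' i k' = if k' = k then 1 else 0)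
    (hZ : LinearIndependent ℝ (fun k : Fin K => fun j : Fin m => Z j k))
    (hZ' : LinearIndependent ℝ (fun k : Fin K => fun j : Fin m => Z' j k))
    (heq : W * Zᵀ = W' * Z'ᵀ) :
    ∃ σ : Equiv.Perm (Fin K), Z' = Z * permMatrix σ ∧ W' = W * permMatrix σ :=
  anchored_factorization_unique_general n m K W W' Z Z' hWnn hWrow hW'nn hanchor hanchor' hZ heq
end
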